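/- Let (A,≻,≺,∗) be a coherent noncommutative pre-Poisson algebra, i.e. additionally (x≻y + x≺y)∗z = x∗(y≻z) + y∗(z≺x) for all x,y,z ∈ A. Then the sub-adjacent noncommutative Poisson algebra (A, x·y = x≻y + x≺y, {x,y} = x∗y − y∗x) is coherent: {x, y·z} + {y, z·x} + {z, x·y} = 0 for all x,y,z ∈ A. -/
import Mathlib


open LinearMap Module

/-- `(A, succ, prec)` is a dendriform algebra. -/
def IsDendriform (K : Type*) [Field K] {A : Type*} [AddCommGroup A] [Module K A]
    (succ prec : A →ₗ[K] A →ₗ[K] A) : Prop :=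
  (∀ x y z, prec (prec x y) z = prec x (succ y z + prec y z)) ∧
  (∀ x y z, prec (succ x y) z = succ x (prec y z)) ∧
  (∀ x y z, succ x (succ y z) = succ (succ x y + prec x y) z)

/-- `(A, ast)` is a pre-Lie algebra. -/
def IsPreLie (K : Type*) [Field K] {A : Type*} [AddCommGroup A] [Module K A]
    (ast : A →ₗ[K] A →ₗ[K] A) : Prop :=
  ∀ x y z, ast (ast x y) z - ast x (ast y z) = ast (ast y x) z - ast y (ast x z)

/-- `(A, succ, prec, ast)` is a noncommutative pre-Poisson algebra. -/
def IsNCPrePoisson (K : Type*) [Field K] {A : Type*} [AddCommGroup A] [Module K A]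
    (succ prec ast : A →ₗ[K] A →ₗ[K] A) : Prop :=
  IsDendriform K succ prec ∧ IsPreLie K ast ∧
  (∀ x y z, succ (ast x y - ast y x) z = ast x (succ y z) - succ y (ast x z)) ∧
  (∀ x y z, prec x (ast y z - ast z y) = ast y (prec x z) - prec (ast y x) z) ∧
  (∀ x y z, ast (succ x y + prec x y) z = prec (ast x z) y + succ x (ast y z))

/-- A noncommutative pre-Poisson algebra is coherent if
`(x≻y + x≺y)∗z = x∗(y≻z) + y∗(z≺x)`. -/
def IsCoherentNCPrePoisson (K : Type*) [Field K] {A : Type*} [AddCommGroup A]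
    [Module K A] (succ prec ast : A →ₗ[K] A →ₗ[K] A) : Prop :=
  IsNCPrePoisson K succ prec ast ∧
  (∀ x y z, ast (succ x y + prec x y) z = ast x (succ y z) + ast y (prec z x))

/-- the sub-adjacent noncommutative Poisson algebra of a coherent
noncommutative pre-Poisson algebra is coherent:
`{x, y·z} + {y, z·x} + {z, x·y} = 0` for `x·y = x≻y + x≺y`,
`{x,y} = x∗y - y∗x`. -/
theorem subadjacent_coherent {K A : Type*} [Field K] [CharZero K]
    [AddCommGroup A] [Module K A]
    (succ prec ast : A →ₗ[K] A →ₗ[K] A)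
    (h : IsCoherentNCPrePoisson K succ prec ast) :
    ∀ x y z,
      (ast - ast.flip) x ((succ + prec) y z) +
      (ast - ast.flip) y ((succ + prec) z x) +
      (ast - ast.flip) z ((succ + prec) x y) = 0 := by
  obtain ⟨-, hc⟩ := h
  intro x y z
  simp only [LinearMap.sub_apply, LinearMap.add_apply, LinearMap.flip_apply]
  rw [hc y z x, hc z x y, hc x y z]
  simp only [map_add]
  abel
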